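/- Assume {(a_i,u_i)}_{i=1}^n is superincreasing and a_i u_i ≤ b for all i. Then K = {x ∈ rect(u) : x_j + ∑_{i ∈ I_j} φ_j(i)·(x_i − θ_i) ≤ θ_j for all j ∈ {1,…,n}}; that is, the packing inequalities together with the bounds 0 ≤ x ≤ u give an exact integer reformulation of the superincreasing knapsack. -/

import Mathlib

/-!
For `x` in the box `0 ≤ x ≤ u`, feasibility `∑ aᵢ xᵢ ≤ b` is equivalent to `x ≤ θ` in the
colexicographic order. Indeed, at the greatest index `m` where `x` and `θ` differ, the greedy
choice makes `θₘ` the largest value that still fits above the common tail, while superincreasing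
weights make everything below `m` weigh at most `aₘ`.

The packing inequality for `j` encodes the same comparison restricted to indices above `j`, in
mixed radix: the digits `xᵢ - θᵢ ≤ uᵢ - θᵢ` carry the place values `∏ₖ (uₖ + 1 - θₖ)`, so a
negative leading digit makes the whole number `≤ -1`, and `x_j ≤ u_j` becomes `x_j ≤ θ_j` after
adding `(u_j - θ_j)` times it. Indices with `θᵢ = 0` can be left out: no negative digit occurs there.
-/

open Finset

section MixedRadix

variable {ι R : Type*} [LinearOrder ι]

theorem sum_prod_filter_lt_mul_sub_one [CommRing R] (s : Finset ι) (c : ι → R) :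
    ∑ i ∈ s, (∏ k ∈ s with k < i, c k) * (c i - 1) = ∏ i ∈ s, c i - 1 := by
  have h := prod_add_ordered s (fun _ => (1 : R)) (fun i => c i - 1)
  simp only [add_sub_cancel, prod_const_one, mul_one] at h
  rw [h, add_sub_cancel_left]
  exact sum_congr rfl fun i _ => mul_comm _ _

theorem sum_prod_filter_lt_mul_le_neg_one [CommRing R] [LinearOrder R] [IsStrictOrderedRing R]
    {s : Finset ι} {c d : ι → R} {m : ι} (hm : m ∈ s) (hc : ∀ i ∈ s, 0 ≤ c i)
    (hlt : ∀ i ∈ s, i < m → d i ≤ c i - 1) (hdm : d m ≤ -1)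
    (hgt : ∀ i ∈ s, m < i → d i = 0) :
    ∑ i ∈ s, (∏ k ∈ s with k < i, c k) * d i ≤ -1 := by
  set L := s.filter (· < m)
  have hprod_nonneg : ∀ t ⊆ s, 0 ≤ ∏ k ∈ t, c k := fun t ht =>
    prod_nonneg fun k hk => hc k (ht hk)
  have hlow : ∑ i ∈ L, (∏ k ∈ s with k < i, c k) * d i ≤ ∏ k ∈ L, c k - 1 := calc
    _ ≤ ∑ i ∈ L, (∏ k ∈ L with k < i, c k) * (c i - 1) := by
      refine sum_le_sum fun i hi => ?_
      obtain ⟨his, him⟩ := mem_filter.1 hi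
      have hfilter : L.filter (· < i) = s.filter (· < i) := by
        rw [filter_filter]
        exact filter_congr fun k _ => ⟨And.right, fun hki => ⟨hki.trans him, hki⟩⟩
      rw [hfilter]
      exact mul_le_mul_of_nonneg_left (hlt i his him) (hprod_nonneg _ (filter_subset _ _))
    _ = _ := sum_prod_filter_lt_mul_sub_one L c
  have htop : ∑ i ∈ s with ¬i < m, (∏ k ∈ s with k < i, c k) * d i = (∏ k ∈ L, c k) * d m :=
    sum_eq_single_of_mem m (mem_filter.2 ⟨hm, lt_irrefl m⟩) fun i hi him => by
      obtain ⟨his, hnlt⟩ := mem_filter.1 hi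
      rw [hgt i his (lt_of_le_of_ne (not_lt.1 hnlt) (Ne.symm him)), mul_zero]
  have hPm := hprod_nonneg L (filter_subset _ _)
  rw [← sum_filter_add_sum_filter_not s (· < m), htop]
  nlinarith

end MixedRadix

section Greedy

variable {ι : Type*} [LinearOrder ι] [LocallyFiniteOrderTop ι]

def IsGreedySolution (a u : ι → ℤ) (b : ℤ) (θ : ι → ℤ) : Prop :=
  ∀ i, θ i = min (u i) ((b - ∑ k ∈ Ioi i, a k * θ k).fdiv (a i))

variable {a u θ : ι → ℤ} {b : ℤ}

theorem IsGreedySolution.le (hθ : IsGreedySolution a u b θ) (i : ι) : θ i ≤ u i := by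
  rw [hθ i]
  exact min_le_left _ _

theorem IsGreedySolution.mul_add_sum_Ioi_le (hθ : IsGreedySolution a u b θ) {i : ι}
    (ha : 0 < a i) : a i * θ i + ∑ k ∈ Ioi i, a k * θ k ≤ b := by
  have h : a i * θ i ≤ b - ∑ k ∈ Ioi i, a k * θ k := calc
    a i * θ i ≤ a i * (b - ∑ k ∈ Ioi i, a k * θ k).fdiv (a i) := by
      rw [hθ i]
      exact mul_le_mul_of_nonneg_left (min_le_right _ _) ha.le
    _ ≤ _ := Int.mul_fdiv_self_le ha
  linarith

theorem IsGreedySolution.lt_mul_add_sum_Ioi (hθ : IsGreedySolution a u b θ) {i : ι}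
    (ha : 0 < a i) (hu : θ i < u i) : b < a i * (θ i + 1) + ∑ k ∈ Ioi i, a k * θ k := by
  have hq : θ i = (b - ∑ k ∈ Ioi i, a k * θ k).fdiv (a i) := by
    have := hθ i
    omega
  have := Int.lt_fdiv_add_one_mul_self (b - ∑ k ∈ Ioi i, a k * θ k) ha
  rw [← hq] at this
  linarith

end Greedy

section Colex

variable {ι β : Type*} [LinearOrder ι]

def ColexLE [LE β] (x y : ι → β) : Prop :=
  ∀ j, (∀ i, j < i → x i = y i) → x j ≤ y j

theorem Finset.exists_maximal_ne {s : Finset ι} {x y : ι → β} (h : ∃ i ∈ s, x i ≠ y i) :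
    ∃ m ∈ s, x m ≠ y m ∧ ∀ i ∈ s, m < i → x i = y i := by
  classical
  obtain ⟨i, hi, hne⟩ := h
  obtain ⟨m, hm, hmax⟩ :=
    (s.filter fun i => x i ≠ y i).exists_max_image id ⟨i, mem_filter.2 ⟨hi, hne⟩⟩
  refine ⟨m, (mem_filter.1 hm).1, (mem_filter.1 hm).2, fun i hi hmi => ?_⟩
  by_contra hne
  exact (hmax i (mem_filter.2 ⟨hi, hne⟩)).not_gt hmi

end Colex

section Knapsack

variable {ι : Type*} [LinearOrder ι] [Fintype ι] [LocallyFiniteOrderTop ι]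
  [LocallyFiniteOrderBot ι] {a u θ x : ι → ℤ} {b : ℤ}

theorem Finset.sum_eq_sum_Iio_add_add_sum_Ioi {M : Type*} [AddCommMonoid M] (f : ι → M)
    (j : ι) : ∑ i, f i = ∑ i ∈ Iio j, f i + f j + ∑ i ∈ Ioi j, f i := by
  rw [add_assoc, add_sum_Ioi_eq_sum_Ici, ← sum_filter_add_sum_filter_not univ (· < j)]
  congr 1 <;> exact sum_congr (by ext; simp) fun _ _ => rfl

theorem colexLE_of_sum_mul_le (hθ : IsGreedySolution a u b θ) (ha : ∀ i, 0 < a i)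
    (hx₀ : ∀ i, 0 ≤ x i) (hxu : ∀ i, x i ≤ u i) (hx : ∑ i, a i * x i ≤ b) : ColexLE x θ := by
  intro j hj
  by_contra! hlt
  have hb := hθ.lt_mul_add_sum_Ioi (ha j) (hlt.trans_le (hxu j))
  have hIoi : ∑ k ∈ Ioi j, a k * x k = ∑ k ∈ Ioi j, a k * θ k :=
    sum_congr rfl fun k hk => by rw [hj k (mem_Ioi.1 hk)]
  have hIio : 0 ≤ ∑ k ∈ Iio j, a k * x k := sum_nonneg fun k _ => mul_nonneg (ha k).le (hx₀ k)
  have hxj := mul_le_mul_of_nonneg_left (show θ j + 1 ≤ x j from hlt) (ha j).le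
  rw [sum_eq_sum_Iio_add_add_sum_Ioi _ j, hIoi] at hx
  linarith

theorem sum_mul_le_of_colexLE [Nonempty ι] (hθ : IsGreedySolution a u b θ) (ha : ∀ i, 0 < a i)
    (hsi : ∀ j, ∑ k ∈ Iio j, a k * u k ≤ a j) (hxu : ∀ i, x i ≤ u i) (hx : ColexLE x θ) :
    ∑ i, a i * x i ≤ b := by
  by_cases hxθ : x = θ
  · subst hxθ
    obtain ⟨j, hj⟩ := Finite.exists_min (id : ι → ι)
    have hIio : Iio j = ∅ := Iio_eq_empty.2 fun i _ => hj i
    rw [sum_eq_sum_Iio_add_add_sum_Ioi _ j, hIio, sum_empty, zero_add]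
    exact hθ.mul_add_sum_Ioi_le (ha j)
  · obtain ⟨m, -, hm, htop⟩ := exists_maximal_ne (s := univ)
      (by simpa [funext_iff] using hxθ)
    have hlt : x m < θ m := (hx m fun i hi => htop i (mem_univ i) hi).lt_of_ne hm
    have hIoi : ∑ k ∈ Ioi m, a k * x k = ∑ k ∈ Ioi m, a k * θ k :=
      sum_congr rfl fun k hk => by rw [htop k (mem_univ k) (mem_Ioi.1 hk)]
    have hIio : ∑ k ∈ Iio m, a k * x k ≤ a m :=
      (sum_le_sum fun k _ => mul_le_mul_of_nonneg_left (hxu k) (ha k).le).trans (hsi m)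
    have hxm := mul_le_mul_of_nonneg_left (show x m ≤ θ m - 1 by omega) (ha m).le
    rw [sum_eq_sum_Iio_add_add_sum_Ioi _ m, hIoi]
    linarith [hθ.mul_add_sum_Ioi_le (ha m)]

end Knapsack

section Packing

variable {ι : Type*} [LinearOrder ι] [LocallyFiniteOrderTop ι] {u θ x : ι → ℤ}

theorem sum_filter_Ioi_mul_sub_eq_zero {p : ι → Prop} [DecidablePred p] {w : ι → ℤ} {j : ι}
    (h : ∀ i, j < i → x i = θ i) : ∑ i ∈ (Ioi j).filter p, w i * (x i - θ i) = 0 :=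
  sum_eq_zero fun i hi => by rw [h i (mem_Ioi.1 (mem_filter.1 hi).1), sub_self, mul_zero]

theorem colexLE_of_packing {p : ι → Prop} [DecidablePred p] {w : ι → ι → ℤ}
    (h : ∀ j, x j + ∑ i ∈ (Ioi j).filter p, w j i * (x i - θ i) ≤ θ j) : ColexLE x θ :=
  fun j hj => by simpa [sum_filter_Ioi_mul_sub_eq_zero hj] using h j

theorem packing_of_colexLE [LocallyFiniteOrder ι] (hθu : ∀ i, θ i ≤ u i) (hx₀ : ∀ i, 0 ≤ x i)
    (hxu : ∀ i, x i ≤ u i) (hx : ColexLE x θ) (j : ι) :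
    x j + ∑ i ∈ (Ioi j).filter (fun i => 1 ≤ θ i),
      (u j - θ j) * (∏ k ∈ (Ioo j i).filter (fun k => 1 ≤ θ k), (u k + 1 - θ k)) * (x i - θ i)
      ≤ θ j := by
  by_cases hagree : ∀ i, j < i → x i = θ i
  · simpa [sum_filter_Ioi_mul_sub_eq_zero hagree] using hx j hagree
  push Not at hagree
  set T := (Ioi j).filter (fun i => 1 ≤ θ i)
  have hprod : ∀ i, (Ioo j i).filter (fun k => 1 ≤ θ k) = T.filter (· < i) := fun i => by
    ext k
    simp only [T, mem_filter, mem_Ioo, mem_Ioi]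
    tauto
  simp_rw [hprod, mul_assoc, ← mul_sum]
  obtain ⟨m, hmj, hm, htop⟩ := exists_maximal_ne (s := Ioi j) (by simpa using hagree)
  have hlt : x m < θ m :=
    (hx m fun i hi => htop i (mem_Ioi.2 ((mem_Ioi.1 hmj).trans hi)) hi).lt_of_ne hm
  have hmT : m ∈ T := mem_filter.2 ⟨hmj, by linarith [hx₀ m]⟩
  have hneg := sum_prod_filter_lt_mul_le_neg_one hmT (c := fun k => u k + 1 - θ k)
    (d := fun i => x i - θ i) (fun i _ => by linarith [hθu i]) (fun i _ _ => by linarith [hxu i])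
    (by linarith) (fun i hi hmi => by rw [htop i (mem_filter.1 hi).1 hmi, sub_self])
  nlinarith [hθu j, hxu j]

end Packing

theorem Fin.sum_Iio_le_of_sum_Iic_le {M : Type*} [AddCommMonoid M] [Preorder M] {n : ℕ}
    {w a : Fin n → M} (ha : ∀ i, 0 ≤ a i)
    (h : ∀ i j : Fin n, (j : ℕ) = (i : ℕ) + 1 → ∑ k ∈ Iic i, w k ≤ a j) (j : Fin n) :
    ∑ k ∈ Iio j, w k ≤ a j := by
  rcases j with ⟨_ | i, hj⟩
  · have hIio : Iio (⟨0, hj⟩ : Fin n) = ∅ := Iio_eq_empty.2 fun k _ => Nat.zero_le _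
    rw [hIio, sum_empty]
    exact ha _
  · convert h ⟨i, by omega⟩ ⟨i + 1, hj⟩ rfl using 2
    ext k
    simp only [mem_Iio, mem_Iic, Fin.lt_def, Fin.le_def]
    omega

theorem stmt_7_general {n : ℕ} (hn : 1 ≤ n)
    (a u : Fin n → ℤ) (ha : ∀ i, 0 < a i)
    (b : ℤ)
    (hsi : ∀ i j : Fin n, (j : ℕ) = (i : ℕ) + 1 →
      ∑ k ∈ Finset.Iic i, a k * u k ≤ a j)
    (θ : Fin n → ℤ)
    (hθ : ∀ i : Fin n,
      θ i = min (u i) ((b - ∑ k ∈ Finset.Ioi i, a k * θ k).fdiv (a i)))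
    (φ : Fin n → Fin n → ℤ)
    (hφ : ∀ j i : Fin n, φ j i =
      (u j - θ j) * ∏ k ∈ (Finset.Ioo j i).filter (fun k => 1 ≤ θ k), (u k + 1 - θ k)) :
    {x : Fin n → ℤ | (∀ i, 0 ≤ x i ∧ x i ≤ u i) ∧ ∑ i, a i * x i ≤ b} =
      {x : Fin n → ℤ | (∀ i, 0 ≤ x i ∧ x i ≤ u i) ∧
        ∀ j : Fin n,
          x j + ∑ i ∈ (Finset.Ioi j).filter (fun i => 1 ≤ θ i), φ j i * (x i - θ i)
            ≤ θ j} := by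
  have : Nonempty (Fin n) := ⟨⟨0, hn⟩⟩
  have hθ : IsGreedySolution a u b θ := hθ
  have hsi' := Fin.sum_Iio_le_of_sum_Iic_le (fun i => (ha i).le) hsi
  simp only [hφ]
  refine Set.ext fun x => and_congr_right fun hx => ⟨fun hsum => ?_, fun hpack => ?_⟩
  · exact packing_of_colexLE hθ.le (fun i => (hx i).1) (fun i => (hx i).2)
      (colexLE_of_sum_mul_le hθ ha (fun i => (hx i).1) (fun i => (hx i).2) hsum)
  · exact sum_mul_le_of_colexLE hθ ha hsi' (fun i => (hx i).2) (colexLE_of_packing hpack)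

/-- the packing inequalities together with the bounds `0 ≤ x ≤ u` give an
exact integer reformulation of the superincreasing knapsack `K`. -/
theorem stmt_7 {n : ℕ} (hn : 1 ≤ n)
    (a u : Fin n → ℤ) (ha : ∀ i, 0 < a i) (hu : ∀ i, 1 ≤ u i)
    (b : ℤ) (hb : 0 < b)
    (hub : ∀ i, a i * u i ≤ b)
    (hsi : ∀ i j : Fin n, (j : ℕ) = (i : ℕ) + 1 →
      ∑ k ∈ Finset.Iic i, a k * u k ≤ a j)
    (θ : Fin n → ℤ)
    (hθ : ∀ i : Fin n,
      θ i = min (u i) ((b - ∑ k ∈ Finset.Ioi i, a k * θ k).fdiv (a i)))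
    (φ : Fin n → Fin n → ℤ)
    (hφ : ∀ j i : Fin n, φ j i =
      (u j - θ j) * ∏ k ∈ (Finset.Ioo j i).filter (fun k => 1 ≤ θ k), (u k + 1 - θ k)) :
    {x : Fin n → ℤ | (∀ i, 0 ≤ x i ∧ x i ≤ u i) ∧ ∑ i, a i * x i ≤ b} =
      {x : Fin n → ℤ | (∀ i, 0 ≤ x i ∧ x i ≤ u i) ∧
        ∀ j : Fin n,
          x j + ∑ i ∈ (Finset.Ioi j).filter (fun i => 1 ≤ θ i), φ j i * (x i - θ i)
            ≤ θ j} :=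
  stmt_7_general hn a u ha b hsi θ hθ φ hφ
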